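/- For a normal prior N(m, γ²), the volatility of the conditional probability process satisfies σ(t,π) = φ(Φ⁻¹(π)) · γ/√(1 + tγ²), where φ and Φ are the standard normal density and CDF. In particular, t ↦ σ(t,π) is strictly decreasing to 0 for every fixed π ∈ (0,1). -/
import Mathlib

open MeasureTheory Set Filter

/-- The standard normal density. -/
noncomputable def stdNormalPdf (z : ℝ) : ℝ :=
  Real.exp (-z ^ 2 / 2) / Real.sqrt (2 * Real.pi)

/-- The standard normal cumulative distribution function. -/
noncomputable def stdNormalCdf (y : ℝ) : ℝ :=
  ∫ z in Set.Iic y, Real.exp (-z ^ 2 / 2) / Real.sqrt (2 * Real.pi)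

lemma stdNormalPdf_pos (z : ℝ) : 0 < stdNormalPdf z := by
  unfold stdNormalPdf
  positivity

lemma continuous_stdNormalPdf : Continuous stdNormalPdf := by
  unfold stdNormalPdf
  fun_prop

lemma integrable_stdNormalPdf : Integrable stdNormalPdf := by
  have h := (integrable_exp_neg_mul_sq (show (0:ℝ) < 1/2 by norm_num)).div_const
    (Real.sqrt (2 * Real.pi))
  refine h.congr (Eventually.of_forall fun z => ?_)
  unfold stdNormalPdf
  ring_nf

lemma hasDerivAt_stdNormalCdf (y : ℝ) :
    HasDerivAt stdNormalCdf (stdNormalPdf y) y := by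
  have hint : ∀ a b : ℝ, IntervalIntegrable stdNormalPdf volume a b :=
    fun a b => integrable_stdNormalPdf.intervalIntegrable
  have hD : HasDerivAt (fun u => ∫ z in (0:ℝ)..u, stdNormalPdf z) (stdNormalPdf y) y :=
    intervalIntegral.integral_hasDerivAt_right (hint 0 y)
      continuous_stdNormalPdf.aestronglyMeasurable.stronglyMeasurableAtFilter
      continuous_stdNormalPdf.continuousAt
  have heq : ∀ u : ℝ, stdNormalCdf u = stdNormalCdf 0 + ∫ z in (0:ℝ)..u, stdNormalPdf z := by
    intro u
    have := intervalIntegral.integral_Iic_sub_Iic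
      (f := stdNormalPdf) (μ := volume) (a := (0:ℝ)) (b := u)
      integrable_stdNormalPdf.integrableOn integrable_stdNormalPdf.integrableOn
    have h2 : stdNormalCdf u - stdNormalCdf 0 = ∫ z in (0:ℝ)..u, stdNormalPdf z := this
    linarith
  have : HasDerivAt (fun u => stdNormalCdf 0 + ∫ z in (0:ℝ)..u, stdNormalPdf z)
      (stdNormalPdf y) y := (hasDerivAt_const y _).add hD |>.congr_deriv (by ring)
  exact this.congr_of_eventuallyEq (Eventually.of_forall fun u => (heq u))

lemma strictMono_stdNormalCdf : StrictMono stdNormalCdf :=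
  strictMono_of_deriv_pos fun y => by
    rw [(hasDerivAt_stdNormalCdf y).deriv]; exact stdNormalPdf_pos y

theorem stmt_9 (m γ : ℝ) (hγ : 0 < γ)
    (πf : ℝ → ℝ → ℝ)
    (hπf : ∀ t x, πf t x =
      stdNormalCdf ((m + γ ^ 2 * x) / (γ * Real.sqrt (1 + t * γ ^ 2))))
    (x : ℝ → ℝ → ℝ)
    (hx : ∀ t, 0 ≤ t → ∀ p ∈ Set.Ioo (0:ℝ) 1, πf t (x t p) = p)
    (σ : ℝ → ℝ → ℝ)
    (hσ : ∀ t p, σ t p = deriv (πf t) (x t p)) :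
    ∀ p ∈ Set.Ioo (0:ℝ) 1,
      (∀ t, 0 ≤ t → ∀ y : ℝ, stdNormalCdf y = p →
        σ t p = stdNormalPdf y * γ / Real.sqrt (1 + t * γ ^ 2)) ∧
      StrictAntiOn (fun t => σ t p) (Set.Ici 0) ∧
      Tendsto (fun t => σ t p) atTop (nhds 0) := by
  intro p hp
  -- basic positivity facts
  have hs : ∀ t : ℝ, 0 ≤ t → 0 < Real.sqrt (1 + t * γ ^ 2) := by
    intro t ht
    apply Real.sqrt_pos.2
    nlinarith [sq_nonneg γ]
  -- the derivative formula
  have hderiv : ∀ t : ℝ, 0 ≤ t →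
      σ t p = stdNormalPdf ((m + γ ^ 2 * x t p) / (γ * Real.sqrt (1 + t * γ ^ 2)))
        * γ / Real.sqrt (1 + t * γ ^ 2) := by
    intro t ht
    have hs' := hs t ht
    have hden : γ * Real.sqrt (1 + t * γ ^ 2) ≠ 0 := by positivity
    set c : ℝ := γ ^ 2 / (γ * Real.sqrt (1 + t * γ ^ 2)) with hc
    have hinner : HasDerivAt (fun u : ℝ => (m + γ ^ 2 * u) / (γ * Real.sqrt (1 + t * γ ^ 2)))
        c (x t p) := by
      have : HasDerivAt (fun u : ℝ => (m + γ ^ 2 * u)) (γ ^ 2) (x t p) := by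
        simpa using (hasDerivAt_id (x t p)).const_mul (γ ^ 2) |>.const_add m
      exact this.div_const _
    have hcomp := (hasDerivAt_stdNormalCdf
      ((m + γ ^ 2 * x t p) / (γ * Real.sqrt (1 + t * γ ^ 2)))).comp (x t p) hinner
    have hfun : πf t = fun u => stdNormalCdf ((m + γ ^ 2 * u) / (γ * Real.sqrt (1 + t * γ ^ 2))) :=
      funext (hπf t)
    have hd := hcomp.deriv
    simp only [Function.comp_def] at hd
    rw [hσ, hfun, hd, hc]
    field_simp
  -- constancy of the argument in t
  set y₀ : ℝ := (m + γ ^ 2 * x 0 p) / (γ * Real.sqrt (1 + 0 * γ ^ 2)) with hy₀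
  have harg : ∀ t : ℝ, 0 ≤ t →
      (m + γ ^ 2 * x t p) / (γ * Real.sqrt (1 + t * γ ^ 2)) = y₀ := by
    intro t ht
    apply strictMono_stdNormalCdf.injective
    have h1 := hx t ht p hp
    have h0 := hx 0 le_rfl p hp
    rw [hπf] at h1 h0
    rw [h1, hy₀, h0]
  have hform : ∀ t : ℝ, 0 ≤ t →
      σ t p = stdNormalPdf y₀ * γ / Real.sqrt (1 + t * γ ^ 2) := by
    intro t ht
    rw [hderiv t ht, harg t ht]
  have hC : 0 < stdNormalPdf y₀ * γ := mul_pos (stdNormalPdf_pos y₀) hγ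
  refine ⟨?_, ?_, ?_⟩
  · intro t ht y hy
    have hyy : y = y₀ := by
      apply strictMono_stdNormalCdf.injective
      have h0 := hx 0 le_rfl p hp
      rw [hπf] at h0
      rw [hy, hy₀, h0]
    rw [hform t ht, hyy]
  · intro a ha b hb hab
    show σ b p < σ a p
    rw [hform a ha, hform b hb]
    apply div_lt_div_of_pos_left hC (hs a ha)
    have hγ2 : 0 < γ ^ 2 := by positivity
    apply Real.sqrt_lt_sqrt (by nlinarith [mem_Ici.1 ha])
    nlinarith [mem_Ici.1 ha]
  · have hsq : Tendsto Real.sqrt atTop atTop := by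
      refine tendsto_atTop_atTop.2 fun b => ⟨max (b ^ 2) 0, fun a ha => ?_⟩
      calc b ≤ |b| := le_abs_self b
        _ = Real.sqrt (b ^ 2) := (Real.sqrt_sq_eq_abs b).symm
        _ ≤ Real.sqrt a := Real.sqrt_le_sqrt (le_trans (le_max_left _ _) ha)
    have h1 : Tendsto (fun t : ℝ => stdNormalPdf y₀ * γ / Real.sqrt (1 + t * γ ^ 2))
        atTop (nhds 0) := by
      apply Tendsto.div_atTop tendsto_const_nhds
      apply hsq.comp
      apply tendsto_atTop_add_const_left
      exact Tendsto.atTop_mul_const (by positivity) tendsto_id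
    exact h1.congr' ((eventually_ge_atTop 0).mono fun t ht => (hform t ht).symm)
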